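/- Let L̃* = (1/2)Σ_{j=1}^n [p̃^j(1−p̃^j)/∏_{l<j} p̃^l] ∂²_j. If u is smooth with L̃*u = 0 in the open cube and extends C²-regularly to the open facet {p̃^m = 0}, then multiplying the equation by p̃^m and letting p̃^m → 0 shows that on the facet {p̃^m = 0} the restriction satisfies (1/2)Σ_{j>m} [p̃^j(1−p̃^j)/∏_{m<l<j} p̃^l] ∂²_j U = 0, i.e., all derivative terms with index j ≤ m disappear. -/

import Mathlib

/-!
Along the segment `t ↦ x[m := t]`, `0 < t < 1`, which runs through the open cube to the facet
point `x`, multiply the equation `L̃* u = 0` by `t ∏_{l<m} x_l`. The coefficient of `∂²_j` becomes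
`t · const` for `j < m` and `t(1 - t)` for `j = m`, while for `j > m` the factor `t` cancels the
`p̃^m` in the denominator and leaves exactly the facet coefficient. Since the `∂²_j U` are
continuous up to the facet, letting `t → 0⁺` yields the facet equation.
-/

open Filter Topology Finset Function

/-- Partial derivative in the j-th coordinate direction. -/
noncomputable def pd {n : ℕ} (j : Fin n) (f : (Fin n → ℝ) → ℝ) : (Fin n → ℝ) → ℝ :=
  fun p => fderiv ℝ f p (Pi.single j 1)

lemma Set.EqOn.pd {n : ℕ} {f g : (Fin n → ℝ) → ℝ} {s : Set (Fin n → ℝ)} (hs : IsOpen s)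
    (hfg : Set.EqOn f g s) (j : Fin n) : Set.EqOn (pd j f) (pd j g) s := fun y hy => by
  rw [_root_.pd, _root_.pd, (hfg.eventuallyEq_of_mem (hs.mem_nhds hy)).fderiv_eq]

namespace StemOperator

variable {n : ℕ}

def openCube (n : ℕ) : Set (Fin n → ℝ) := {x | ∀ j, x j ∈ Set.Ioo (0 : ℝ) 1}

def openFacet (m : Fin n) : Set (Fin n → ℝ) := {x | x m = 0 ∧ ∀ j, j ≠ m → x j ∈ Set.Ioo (0 : ℝ) 1}

/-- The coefficient of `∂²_j` in `L̃*` (without the factor `1/2`). -/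
noncomputable def coeff (y : Fin n → ℝ) (j : Fin n) : ℝ :=
  y j * (1 - y j) / ∏ l ∈ univ.filter (fun l : Fin n => l.val < j.val), y l

/-- The coefficient of `∂²_j` in the restriction of `L̃*` to the facet `{p̃^m = 0}`. -/
noncomputable def facetCoeff (m : Fin n) (y : Fin n → ℝ) (j : Fin n) : ℝ :=
  y j * (1 - y j) / ∏ l ∈ univ.filter (fun l : Fin n => m.val < l.val ∧ l.val < j.val), y l

lemma isOpen_openCube : IsOpen (openCube n) := by
  simp only [openCube, Set.ofPred_forall]
  exact isOpen_iInter_of_finite fun j => isOpen_Ioo.preimage (continuous_apply j)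

lemma prod_filter_val_lt_split {M : Type*} [CommMonoid M] (y : Fin n → M) {m j : Fin n}
    (hmj : m.val < j.val) :
    ∏ l ∈ univ.filter (fun l : Fin n => l.val < j.val), y l =
      (∏ l ∈ univ.filter (fun l : Fin n => l.val < m.val), y l) * y m *
        ∏ l ∈ univ.filter (fun l : Fin n => m.val < l.val ∧ l.val < j.val), y l := by
  have hm : m ∈ univ.filter (fun l : Fin n => l.val < j.val) := by simpa using hmj
  have herase : (univ.filter (fun l : Fin n => l.val < j.val)).erase m =
      univ.filter (fun l : Fin n => l.val < m.val) ∪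
        univ.filter (fun l : Fin n => m.val < l.val ∧ l.val < j.val) := by
    ext l
    simp only [mem_erase, mem_filter, mem_union, Finset.mem_univ, true_and, ne_eq, Fin.ext_iff]
    omega
  have hdisj : Disjoint (univ.filter (fun l : Fin n => l.val < m.val))
      (univ.filter (fun l : Fin n => m.val < l.val ∧ l.val < j.val)) := by
    simp only [Finset.disjoint_left, mem_filter, Finset.mem_univ, true_and]
    omega
  rw [← mul_prod_erase _ _ hm, herase, prod_union hdisj]
  ac_rfl

lemma coeff_update_of_lt (x : Fin n → ℝ) {m j : Fin n} (hjm : j.val < m.val) (t : ℝ) :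
    coeff (update x m t) j = coeff x j := by
  rw [coeff, prod_update_of_notMem (by simp; omega), update_of_ne (by rintro rfl; omega),
    coeff]

lemma coeff_update_self (x : Fin n → ℝ) (m : Fin n) (t : ℝ) :
    coeff (update x m t) m =
      t * (1 - t) / ∏ l ∈ univ.filter (fun l : Fin n => l.val < m.val), x l := by
  rw [coeff, prod_update_of_notMem (by simp), update_self]

lemma mul_coeff_update_of_gt (x : Fin n → ℝ) {m j : Fin n} (hmj : m.val < j.val)
    (hx : ∀ l : Fin n, l.val < m.val → x l ≠ 0) {t : ℝ} (ht : t ≠ 0) :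
    t * (∏ l ∈ univ.filter (fun l : Fin n => l.val < m.val), x l) *
      coeff (update x m t) j = facetCoeff m x j := by
  have hP : ∏ l ∈ univ.filter (fun l : Fin n => l.val < m.val), x l ≠ 0 :=
    prod_ne_zero_iff.mpr fun l hl => hx l (by simpa using hl)
  rw [coeff, prod_filter_val_lt_split _ hmj, update_self, prod_update_of_notMem (by simp),
    prod_update_of_notMem (by simp), update_of_ne (by rintro rfl; omega), facetCoeff]
  field_simp

lemma update_mem_openCube {m : Fin n} {x : Fin n → ℝ} (hx : x ∈ openFacet m) {t : ℝ}
    (ht : t ∈ Set.Ioo (0 : ℝ) 1) : update x m t ∈ openCube n := fun j => by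
  rcases eq_or_ne j m with rfl | hj
  · rwa [update_self]
  · rw [update_of_ne hj]
    exact hx.2 j hj

lemma tendsto_update_nhdsGT {m : Fin n} {x : Fin n → ℝ} (hx : x ∈ openFacet m) :
    Tendsto (update x m) (𝓝[>] 0) (𝓝[openCube n] x) := by
  refine tendsto_nhdsWithin_iff.mpr ⟨?_, ?_⟩
  · have h := ((continuous_const (y := x)).update m continuous_id).tendsto (x m)
    rw [id, update_eq_self, hx.1] at h
    exact h.mono_left nhdsWithin_le_nhds
  · filter_upwards [Ioo_mem_nhdsGT one_pos] with t ht using update_mem_openCube hx ht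

lemma tendsto_mul_coeff_update {m : Fin n} {x : Fin n → ℝ} (hx : x ∈ openFacet m) (j : Fin n) :
    Tendsto (fun t => t * (∏ l ∈ univ.filter (fun l : Fin n => l.val < m.val), x l) *
        coeff (update x m t) j) (𝓝[>] 0)
      (𝓝 (if m.val < j.val then facetCoeff m x j else 0)) := by
  set P := ∏ l ∈ univ.filter (fun l : Fin n => l.val < m.val), x l
  rcases lt_trichotomy j.val m.val with hjm | hjm | hmj
  · simp only [coeff_update_of_lt x hjm, if_neg hjm.not_gt]
    refine tendsto_nhdsWithin_of_tendsto_nhds ?_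
    exact (by fun_prop : Continuous fun t : ℝ => t * P * coeff x j).tendsto' 0 0 (by simp)
  · obtain rfl : j = m := Fin.ext hjm
    simp only [coeff_update_self, lt_irrefl, if_false]
    refine tendsto_nhdsWithin_of_tendsto_nhds ?_
    exact (by fun_prop : Continuous fun t : ℝ => t * P * (t * (1 - t) / P)).tendsto' 0 0
      (by simp)
  · have hx0 : ∀ l : Fin n, l.val < m.val → x l ≠ 0 := fun l hl =>
      (hx.2 l (by rintro rfl; omega)).1.ne'
    rw [if_pos hmj]
    refine tendsto_const_nhds.congr' ?_
    filter_upwards [self_mem_nhdsWithin] with t ht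
    exact (mul_coeff_update_of_gt x hmj hx0 (ne_of_gt ht)).symm

end StemOperator

open StemOperator

theorem stem_lemma_facet_zero_general (n : ℕ) (m : Fin n) (u U : (Fin n → ℝ) → ℝ)
    (hUu : ∀ x, (∀ j, x j ∈ Set.Ioo (0:ℝ) 1) → U x = u x)
    (hder : ∀ j : Fin n, ContinuousOn (pd j (pd j U))
      ({x | ∀ j', x j' ∈ Set.Ioo (0:ℝ) 1} ∪
       {x | x m = 0 ∧ ∀ j', j' ≠ m → x j' ∈ Set.Ioo (0:ℝ) 1}))
    (heq : ∀ x : Fin n → ℝ, (∀ j, x j ∈ Set.Ioo (0:ℝ) 1) →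
      (1/2) * ∑ j : Fin n,
        (x j * (1 - x j) /
          ∏ l ∈ Finset.univ.filter (fun l : Fin n => l.val < j.val), x l)
        * pd j (pd j u) x = 0) :
    ∀ x : Fin n → ℝ, x m = 0 → (∀ j, j ≠ m → x j ∈ Set.Ioo (0:ℝ) 1) →
      (1/2) * ∑ j ∈ Finset.univ.filter (fun j : Fin n => m.val < j.val),
        (x j * (1 - x j) /
          ∏ l ∈ Finset.univ.filter
            (fun l : Fin n => m.val < l.val ∧ l.val < j.val), x l)
        * pd j (pd j U) x = 0 := by
  intro x hm hx
  have hxF : x ∈ openFacet m := ⟨hm, hx⟩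
  set P := ∏ l ∈ univ.filter (fun l : Fin n => l.val < m.val), x l
  have hD2 : ∀ j, Set.EqOn (pd j (pd j U)) (pd j (pd j u)) (openCube n) := fun j =>
    (Set.EqOn.pd isOpen_openCube (fun y hy => hUu y hy) j).pd isOpen_openCube j
  have hlim : Tendsto (fun t => ∑ j, t * P * coeff (update x m t) j *
      pd j (pd j U) (update x m t)) (𝓝[>] 0)
      (𝓝 (∑ j, (if m.val < j.val then facetCoeff m x j else 0) * pd j (pd j U) x)) :=
    tendsto_finsetSum _ fun j _ => (tendsto_mul_coeff_update hxF j).mul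
      (((hder j x (Or.inr hxF)).mono Set.subset_union_left).tendsto.comp
        (tendsto_update_nhdsGT hxF))
  have hzero : ∀ᶠ t in 𝓝[>] 0, ∑ j, t * P * coeff (update x m t) j *
      pd j (pd j U) (update x m t) = 0 := by
    filter_upwards [Ioo_mem_nhdsGT one_pos] with t ht
    have hy := update_mem_openCube hxF ht
    calc _ = 2 * (t * P) * ((1 / 2) * ∑ j, coeff (update x m t) j *
          pd j (pd j u) (update x m t)) := by
          simp only [mul_sum, hD2 _ hy]
          exact sum_congr rfl fun j _ => by ring
      _ = 0 := mul_eq_zero_of_right _ (heq _ hy)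
  have := tendsto_nhds_unique hlim (tendsto_const_nhds.congr' (EventuallyEq.symm hzero))
  simp only [ite_zero_mul] at this
  rw [sum_filter]
  exact (mul_eq_zero_of_right _ this :)

/-- Stem lemma, facet case b = 0. If L̃*u = 0 in the open cube and
the extension U is C²-regular up to the open facet {p̃^m = 0}, then on that facet
the restriction satisfies (1/2)Σ_{j>m} [p̃^j(1−p̃^j)/∏_{m<l<j} p̃^l] ∂²_j U = 0,
i.e. all derivative terms with index j ≤ m disappear. -/
theorem stem_lemma_facet_zero (n : ℕ) (m : Fin n) (u U : (Fin n → ℝ) → ℝ)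
    (hUu : ∀ x, (∀ j, x j ∈ Set.Ioo (0:ℝ) 1) → U x = u x)
    (hcont : ContinuousOn U
      ({x | ∀ j, x j ∈ Set.Ioo (0:ℝ) 1} ∪
       {x | x m = 0 ∧ ∀ j, j ≠ m → x j ∈ Set.Ioo (0:ℝ) 1}))
    (hder : ∀ j : Fin n, ContinuousOn (pd j (pd j U))
      ({x | ∀ j', x j' ∈ Set.Ioo (0:ℝ) 1} ∪
       {x | x m = 0 ∧ ∀ j', j' ≠ m → x j' ∈ Set.Ioo (0:ℝ) 1}))
    (heq : ∀ x : Fin n → ℝ, (∀ j, x j ∈ Set.Ioo (0:ℝ) 1) →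
      (1/2) * ∑ j : Fin n,
        (x j * (1 - x j) /
          ∏ l ∈ Finset.univ.filter (fun l : Fin n => l.val < j.val), x l)
        * pd j (pd j u) x = 0) :
    ∀ x : Fin n → ℝ, x m = 0 → (∀ j, j ≠ m → x j ∈ Set.Ioo (0:ℝ) 1) →
      (1/2) * ∑ j ∈ Finset.univ.filter (fun j : Fin n => m.val < j.val),
        (x j * (1 - x j) /
          ∏ l ∈ Finset.univ.filter
            (fun l : Fin n => m.val < l.val ∧ l.val < j.val), x l)
        * pd j (pd j U) x = 0 :=
  stem_lemma_facet_zero_general n m u U hUu hder heq
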